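/- arXiv:2205.03973 — 2 statements merged into one kernel-verified Lean document; each statement's English description precedes it below -/
import Mathlib

section
/- Let n ≥ 3 and k ≥ 1 be integers. In the quotient ring R_{n,k} = ℤ[X_1,…,X_n]/(X_1^{k+1},…,X_n^{k+1}), with A_i the image of X_i, the element ξ_{(n,k)} := [(∏_{i=2}^{n} (A_1 − A_i)) · (A_2 − A_3)]^k equals (−1)^{(n−1)k} · λ_{(3,k)} · A_1^k A_2^k ⋯ A_n^k, where λ_{(3,k)} = Σ_{i=0}^{k} (−1)^i (binom(k,i))^3. -/
/-!
In the quotient every `A i` satisfies `A i ^ (k + 1) = 0`, and everything follows from this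
alone. Expanding `(a - b)^k (a - c)^k (b - c)^k` binomially, the exponents of each term add up
to `3k`, so the only terms not killed by nilpotency are those with `a^k b^k c^k`; their
coefficients add up to `λ_{(3,k)}`. The remaining factors `(A₁ - Aᵢ)^k` then meet `A₁^k`, and
`a^k (a - b)^k = a^k (-b)^k` because `(a - b)^k - (-b)^k` is divisible by `a`.
-/

open MvPolynomial Finset

def lambdaThree (k : ℕ) : ℤ := ∑ i ∈ range (k + 1), (-1) ^ i * (k.choose i : ℤ) ^ 3

theorem lambdaThree_eq_sum_antidiagonal (k : ℕ) :
    lambdaThree k = ∑ p ∈ antidiagonal k, (-1) ^ p.1 * (k.choose p.1 : ℤ) ^ 3 :=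
  (Nat.sum_antidiagonal_eq_sum_range_succ_mk (fun p => (-1) ^ p.1 * (k.choose p.1 : ℤ) ^ 3) k).symm

section

variable {R : Type*} [CommRing R] {k : ℕ}

theorem pow_mul_pow_mul_pow_eq_zero {a b c : R} (ha : a ^ (k + 1) = 0) (hb : b ^ (k + 1) = 0)
    (hc : c ^ (k + 1) = 0) {i j l : ℕ} (h : k < i ∨ k < j ∨ k < l) : a ^ i * b ^ j * c ^ l = 0 := by
  rcases h with h | h | h
  · rw [pow_eq_zero_of_le h ha]; ring
  · rw [pow_eq_zero_of_le h hb]; ring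
  · rw [pow_eq_zero_of_le h hc]; ring

theorem sub_pow_eq_sum_antidiagonal (x y : R) (k : ℕ) :
    (x - y) ^ k = ∑ p ∈ antidiagonal k, ((-1) ^ p.2 * k.choose p.1 : R) * (x ^ p.1 * y ^ p.2) := by
  rw [sub_eq_add_neg, (Commute.all x (-y)).add_pow']
  refine sum_congr rfl fun p _ => ?_
  rw [nsmul_eq_mul, neg_pow]
  ring

theorem sub_pow_mul_sub_pow_mul_sub_pow {a b c : R} (ha : a ^ (k + 1) = 0)
    (hb : b ^ (k + 1) = 0) (hc : c ^ (k + 1) = 0) :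
    (a - b) ^ k * (a - c) ^ k * (b - c) ^ k = lambdaThree k * (a ^ k * b ^ k * c ^ k) := by
  let t : (ℕ × ℕ) → (ℕ × ℕ) → (ℕ × ℕ) → R := fun p q r =>
    ((-1) ^ (p.2 + q.2 + r.2) * k.choose p.1 * k.choose q.1 * k.choose r.1 : R) *
      (a ^ (p.1 + q.1) * b ^ (p.2 + r.1) * c ^ (q.2 + r.2))
  have expand : (a - b) ^ k * (a - c) ^ k * (b - c) ^ k =
      ∑ p ∈ antidiagonal k, ∑ q ∈ antidiagonal k, ∑ r ∈ antidiagonal k, t p q r := by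
    rw [sub_pow_eq_sum_antidiagonal, sub_pow_eq_sum_antidiagonal, sub_pow_eq_sum_antidiagonal,
      sum_mul_sum]
    simp_rw [sum_mul, mul_sum]
    refine sum_congr rfl fun p _ => sum_congr rfl fun q _ => sum_congr rfl fun r _ => ?_
    simp only [t]
    ring
  have vanish : ∀ p ∈ antidiagonal k, ∀ q ∈ antidiagonal k, ∀ r ∈ antidiagonal k,
      (q, r) ≠ (p.swap, p) → t p q r = 0 := by
    intro p hp q hq r hr hqr
    rw [HasAntidiagonal.mem_antidiagonal] at hp hq hr
    refine mul_eq_zero_of_right _ (pow_mul_pow_mul_pow_eq_zero ha hb hc ?_)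
    by_contra! h
    exact hqr (by ext <;> simp <;> omega)
  rw [expand, lambdaThree_eq_sum_antidiagonal, Int.cast_sum, sum_mul]
  refine sum_congr rfl fun p hp => ?_
  have hswap := HasAntidiagonal.swap_mem_antidiagonal.mpr hp
  rw [sum_eq_single_of_mem p.swap hswap fun q hq hne =>
      sum_eq_zero fun r hr => vanish p hp q hq r hr (by simp [hne]),
    sum_eq_single_of_mem p hp fun r hr hne => vanish p hp _ hswap r hr (by simp [hne])]
  rw [HasAntidiagonal.mem_antidiagonal] at hp
  have hchoose : k.choose p.2 = k.choose p.1 := (Nat.choose_symm_of_eq_add hp.symm).symm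
  simp only [t, Prod.fst_swap, Prod.snd_swap, hchoose, hp]
  rw [show p.2 + p.1 + p.2 = p.1 + 2 * p.2 by ring, pow_add, pow_mul, neg_one_sq, one_pow,
    add_comm p.2, hp]
  push_cast
  ring

theorem pow_mul_sub_pow_eq_pow_mul_neg_pow {a : R} (ha : a ^ (k + 1) = 0) (b : R) :
    a ^ k * (a - b) ^ k = a ^ k * (-b) ^ k := by
  obtain ⟨q, hq⟩ := sub_dvd_pow_sub_pow (a - b) (-b) k
  rw [sub_neg_eq_add, sub_add_cancel] at hq
  rw [← sub_eq_zero, ← mul_sub, hq, ← mul_assoc, ← pow_succ, ha, zero_mul]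

theorem pow_mul_prod_sub_pow_eq_pow_mul_prod_neg_pow {ι : Type*} {a : R} (ha : a ^ (k + 1) = 0)
    (s : Finset ι) (x : ι → R) :
    a ^ k * ∏ i ∈ s, (a - x i) ^ k = a ^ k * ∏ i ∈ s, (-x i) ^ k := by
  classical
  induction s using Finset.induction_on with
  | empty => rfl
  | insert j s hj ih =>
    rw [prod_insert hj, prod_insert hj, mul_left_comm, ih, ← mul_assoc, ← mul_assoc,
      mul_comm _ (a ^ k), pow_mul_sub_pow_eq_pow_mul_neg_pow ha]

theorem prod_erase_sub_mul_sub_pow {ι : Type*} [Fintype ι] [DecidableEq ι] {x : ι → R}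
    (hx : ∀ i, x i ^ (k + 1) = 0) {i₀ i₁ i₂ : ι} (h₀₁ : i₀ ≠ i₁) (h₀₂ : i₀ ≠ i₂) (h₁₂ : i₁ ≠ i₂) :
    ((∏ i ∈ univ.erase i₀, (x i₀ - x i)) * (x i₁ - x i₂)) ^ k =
      (-1) ^ ((Fintype.card ι - 1) * k) * lambdaThree k * ∏ i, x i ^ k := by
  set S := ((univ.erase i₀).erase i₁).erase i₂
  have h₁ : i₁ ∈ univ.erase i₀ := mem_erase.mpr ⟨h₀₁.symm, mem_univ _⟩
  have h₂ : i₂ ∈ (univ.erase i₀).erase i₁ :=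
    mem_erase.mpr ⟨h₁₂.symm, mem_erase.mpr ⟨h₀₂.symm, mem_univ _⟩⟩
  have split (f : ι → R) : ∏ i ∈ univ.erase i₀, f i = f i₁ * (f i₂ * ∏ i ∈ S, f i) := by
    rw [mul_prod_erase _ _ h₂, mul_prod_erase _ _ h₁]
  have card : Fintype.card ι - 1 = #S + 2 := by
    have e₂ : #S + 1 = _ := card_erase_add_one h₂
    have e₁ := card_erase_add_one h₁
    rw [card_erase_of_mem (mem_univ _), card_univ] at e₁
    omega
  calc ((∏ i ∈ univ.erase i₀, (x i₀ - x i)) * (x i₁ - x i₂)) ^ k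
      = (x i₀ - x i₁) ^ k * (x i₀ - x i₂) ^ k * (x i₁ - x i₂) ^ k * ∏ i ∈ S, (x i₀ - x i) ^ k := by
        rw [split, mul_pow, mul_pow, mul_pow, prod_pow]; ring
    _ = lambdaThree k * (x i₁ ^ k * x i₂ ^ k) * (x i₀ ^ k * ∏ i ∈ S, (x i₀ - x i) ^ k) := by
        rw [sub_pow_mul_sub_pow_mul_sub_pow (hx i₀) (hx i₁) (hx i₂)]; ring
    _ = lambdaThree k * (x i₁ ^ k * x i₂ ^ k) * (x i₀ ^ k * ∏ i ∈ S, (-x i) ^ k) := by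
        rw [pow_mul_prod_sub_pow_eq_pow_mul_prod_neg_pow (hx i₀)]
    _ = (-1) ^ ((Fintype.card ι - 1) * k) * lambdaThree k * ∏ i, x i ^ k := by
        rw [← mul_prod_erase univ _ (mem_univ i₀), split, card]
        simp only [neg_pow (x _), prod_mul_distrib, prod_const, ← pow_mul]
        rw [add_mul, pow_add, pow_mul (-1) 2, neg_one_sq, one_pow, mul_comm k]
        ring

end

/-- In `ℤ[X_1,…,X_n]/(X_1^{k+1},…,X_n^{k+1})` (indices `0,…,n-1` here), the element
`ξ_{(n,k)} = [(∏_{i=2}^{n} (A_1 − A_i)) · (A_2 − A_3)]^k` equals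
`(−1)^{(n−1)k} · λ_{(3,k)} · A_1^k ⋯ A_n^k`, where
`λ_{(3,k)} = Σ_{i=0}^{k} (−1)^i (binom(k,i))^3`. -/
theorem xi_eq_sign_lambda_top (n k : ℕ) (hn : 3 ≤ n)
    (I : Ideal (MvPolynomial (Fin n) ℤ))
    (hI : I = Ideal.span (Set.range fun i : Fin n => (X i : MvPolynomial (Fin n) ℤ) ^ (k + 1)))
    (A : Fin n → MvPolynomial (Fin n) ℤ ⧸ I)
    (hA : ∀ i, A i = Ideal.Quotient.mk I (X i)) :
    ((∏ i ∈ univ.erase ⟨0, by omega⟩, (A ⟨0, by omega⟩ - A i)) *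
        (A ⟨1, by omega⟩ - A ⟨2, by omega⟩)) ^ k =
      (-1 : MvPolynomial (Fin n) ℤ ⧸ I) ^ ((n - 1) * k) *
        (↑(∑ i ∈ Finset.range (k + 1), (-1 : ℤ) ^ i * (Nat.choose k i : ℤ) ^ 3) :
          MvPolynomial (Fin n) ℤ ⧸ I) *
        ∏ i : Fin n, A i ^ k := by
  have hA_pow : ∀ i, A i ^ (k + 1) = 0 := fun i => by
    rw [hA, ← map_pow, Ideal.Quotient.eq_zero_iff_mem, hI]
    exact Ideal.subset_span ⟨i, rfl⟩
  have h := prod_erase_sub_mul_sub_pow hA_pow (i₀ := ⟨0, by omega⟩) (i₁ := ⟨1, by omega⟩)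
    (i₂ := ⟨2, by omega⟩) (by simp) (by simp) (by simp)
  rwa [Fintype.card_fin] at h
end

section
/- Let k ≥ 1 be an integer. In the quotient ring ℤ[x,y,z]/(x^{k+1}, y^{k+1}, z^{k+1}), denoting by x̄, ȳ, z̄ the images of x, y, z, one has [(x̄ − ȳ)(x̄ − z̄)(ȳ − z̄)]^k = λ_{(3,k)} · x̄^k ȳ^k z̄^k, where λ_{(3,k)} = Σ_{i=0}^{k} (−1)^i (binom(k,i))^3. -/
open MvPolynomial Finset

/-!
The identity holds in any commutative ring in which `x^{k+1} = y^{k+1} = z^{k+1} = 0`.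
Expanding each factor by the binomial theorem, the term `x^a y^{k-a} · x^b z^{k-b} · y^c z^{k-c}`
has total degree `3k`; it survives only if no exponent exceeds `k`, i.e. all three equal `k`,
which forces `b = k - a`, `c = a`. The surviving coefficient is `(-1)^a binom(k,a)^3`.
-/

section TruncatedPowers

variable {A : Type*} [CommRing A] {k : ℕ} {x y z : A}

theorem pow_mul_pow_mul_pow_eq_zero_s1 (hx : x ^ (k + 1) = 0) (hy : y ^ (k + 1) = 0)
    (hz : z ^ (k + 1) = 0) {i j l : ℕ} (h : k < i ∨ k < j ∨ k < l) :
    x ^ i * y ^ j * z ^ l = 0 := by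
  rcases h with h | h | h
  · simp [pow_eq_zero_of_le h hx]
  · simp [pow_eq_zero_of_le h hy]
  · simp [pow_eq_zero_of_le h hz]

theorem sub_mul_sub_mul_sub_pow_of_pow_succ_eq_zero (hx : x ^ (k + 1) = 0)
    (hy : y ^ (k + 1) = 0) (hz : z ^ (k + 1) = 0) :
    ((x - y) * (x - z) * (y - z)) ^ k =
      ((∑ i ∈ range (k + 1), (-1 : ℤ) ^ i * (k.choose i : ℤ) ^ 3 : ℤ) : A) *
        (x ^ k * y ^ k * z ^ k) := by
  rw [mul_pow, mul_pow, sub_pow, sub_pow, sub_pow, sum_mul_sum, sum_mul]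
  push_cast
  rw [sum_mul]
  refine sum_congr rfl fun a ha => ?_
  rw [mem_range] at ha
  rw [sum_mul_sum, ← sum_product',
    sum_eq_single_of_mem (k - a, a) (by simp only [mem_product, mem_range]; omega)]
  · obtain ⟨b, rfl⟩ : ∃ b, k = a + b := ⟨k - a, by omega⟩
    have hsign : ((-1 : A) ^ (a + (a + b))) * (-1) ^ (b + (a + b)) * (-1) ^ (a + (a + b)) =
        (-1) ^ a := by
      rw [← pow_add, ← pow_add, show a + (a + b) + (b + (a + b)) + (a + (a + b)) =
        a + 2 * (2 * (a + b)) by omega, pow_add, pow_mul, neg_one_sq, one_pow, mul_one]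
    simp only [Nat.add_sub_cancel_left, Nat.add_sub_cancel, ← Nat.choose_symm_add]
    linear_combination (((a + b).choose a : A) ^ 3 * (x ^ (a + b) * y ^ (a + b) * z ^ (a + b))) *
      hsign
  · rintro ⟨b, c⟩ hbc hne
    simp only [mem_product, mem_range] at hbc
    have hvanish := pow_mul_pow_mul_pow_eq_zero_s1 (i := a + b) (j := k - a + c)
      (l := k - b + (k - c)) hx hy hz (by simp only [ne_eq, Prod.mk.injEq] at hne; omega)
    linear_combination ((-1) ^ (a + k) * (-1) ^ (b + k) * (-1) ^ (c + k) *
      (k.choose a * k.choose b * k.choose c : A)) * hvanish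

end TruncatedPowers

theorem xi_three_eq_lambda_top_general (k : ℕ)
    (I : Ideal (MvPolynomial (Fin 3) ℤ))
    (hI : I = Ideal.span (Set.range fun i : Fin 3 => (X i : MvPolynomial (Fin 3) ℤ) ^ (k + 1)))
    (x y z : MvPolynomial (Fin 3) ℤ ⧸ I)
    (hx : x = Ideal.Quotient.mk I (X 0))
    (hy : y = Ideal.Quotient.mk I (X 1))
    (hz : z = Ideal.Quotient.mk I (X 2)) :
    ((x - y) * (x - z) * (y - z)) ^ k =
      (↑(∑ i ∈ Finset.range (k + 1), (-1 : ℤ) ^ i * (Nat.choose k i : ℤ) ^ 3) :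
        MvPolynomial (Fin 3) ℤ ⧸ I) * (x ^ k * y ^ k * z ^ k) := by
  have hX : ∀ i, Ideal.Quotient.mk I (X i) ^ (k + 1) = 0 := fun i => by
    rw [← map_pow, Ideal.Quotient.eq_zero_iff_mem, hI]
    exact Ideal.subset_span ⟨i, rfl⟩
  subst hx hy hz
  exact sub_mul_sub_mul_sub_pow_of_pow_succ_eq_zero (hX 0) (hX 1) (hX 2)

/-- In `ℤ[x,y,z]/(x^{k+1}, y^{k+1}, z^{k+1})`, one has
`[(x̄ − ȳ)(x̄ − z̄)(ȳ − z̄)]^k = λ_{(3,k)} · x̄^k ȳ^k z̄^k`, where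
`λ_{(3,k)} = Σ_{i=0}^{k} (−1)^i (binom(k,i))^3`. -/
theorem xi_three_eq_lambda_top (k : ℕ) (hk : 1 ≤ k)
    (I : Ideal (MvPolynomial (Fin 3) ℤ))
    (hI : I = Ideal.span (Set.range fun i : Fin 3 => (X i : MvPolynomial (Fin 3) ℤ) ^ (k + 1)))
    (x y z : MvPolynomial (Fin 3) ℤ ⧸ I)
    (hx : x = Ideal.Quotient.mk I (X 0))
    (hy : y = Ideal.Quotient.mk I (X 1))
    (hz : z = Ideal.Quotient.mk I (X 2)) :
    ((x - y) * (x - z) * (y - z)) ^ k =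
      (↑(∑ i ∈ Finset.range (k + 1), (-1 : ℤ) ^ i * (Nat.choose k i : ℤ) ^ 3) :
        MvPolynomial (Fin 3) ℤ ⧸ I) * (x ^ k * y ^ k * z ^ k) :=
  xi_three_eq_lambda_top_general k I hI x y z hx hy hz
end
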